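/- Let p ≥ 3 be a prime and k, n, a integers with 1 ≤ k ≤ n. Define T_p(n,k,a) as the sum over all tuples (x₁,…,xₙ) with each xᵢ ∈ {1,…,p-1} and x₁+⋯+xₙ ≡ a (mod p) of the Legendre symbol ((x₁·x₂·⋯·x_k)/p). Then for k ≤ n-1, T_p(n,k,a) = -T_p(n-1,k,a); consequently T_p(n,k,a) = (-1)^{n-k}·T_p(k,k,a). -/
import Mathlib

/-- `Tsum p n k a` is the sum over all tuples `(x₁,…,xₙ)` of nonzero residues mod `p`
with `x₁+⋯+xₙ ≡ a (mod p)` of the Legendre symbol `((x₁⋯x_k)/p)`. -/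
def Tsum (p : ℕ) [Fact p.Prime] (n k : ℕ) (a : ZMod p) : ℤ :=
  ∑ x ∈ Finset.univ.filter
      (fun x : Fin n → ZMod p => (∀ i, x i ≠ 0) ∧ ∑ i, x i = a),
    quadraticChar (ZMod p) (∏ i ∈ Finset.univ.filter (fun i : Fin n => (i : ℕ) < k), x i)

lemma prod_snoc_aux {p : ℕ} {m k : ℕ} (hkm : k ≤ m) (x : Fin (m + 1) → ZMod p) :
    ∏ i ∈ Finset.univ.filter (fun i : Fin (m + 1) => (i : ℕ) < k), x i
      = ∏ i ∈ Finset.univ.filter (fun i : Fin m => (i : ℕ) < k), x (Fin.castSucc i) := by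
  rw [Finset.prod_filter, Finset.prod_filter, Fin.prod_univ_castSucc]
  simp [Nat.not_lt.mpr hkm]

lemma sum_all_nonzero_zero (p : ℕ) [Fact p.Prime] (hp : 3 ≤ p) (m k : ℕ)
    (hk : 1 ≤ k) (hkm : k ≤ m) :
    ∑ x ∈ Finset.univ.filter (fun x : Fin m → ZMod p => ∀ i, x i ≠ 0),
      quadraticChar (ZMod p) (∏ i ∈ Finset.univ.filter (fun i : Fin m => (i : ℕ) < k), x i)
      = 0 := by
  have hfil : Finset.univ.filter (fun x : Fin m → ZMod p => ∀ i, x i ≠ 0)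
      = Fintype.piFinset (fun _ : Fin m => Finset.univ.filter (· ≠ 0)) := by
    ext x; simp [Fintype.mem_piFinset]
  rw [hfil]
  have hterm : ∀ x : Fin m → ZMod p,
      quadraticChar (ZMod p) (∏ i ∈ Finset.univ.filter (fun i : Fin m => (i : ℕ) < k), x i)
        = ∏ i : Fin m, (if (i : ℕ) < k then quadraticChar (ZMod p) (x i) else 1) := by
    intro x
    rw [map_prod, Finset.prod_filter]
  simp_rw [hterm]
  rw [Finset.sum_prod_piFinset (Finset.univ.filter (· ≠ (0 : ZMod p)))
    (fun (i : Fin m) (j : ZMod p) =>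
      if (i : ℕ) < k then ((quadraticChar (ZMod p)) j : ℤ) else 1)]
  have hm : 0 < m := lt_of_lt_of_le hk hkm
  apply Finset.prod_eq_zero (Finset.mem_univ (⟨0, hm⟩ : Fin m))
  have : ((⟨0, hm⟩ : Fin m) : ℕ) < k := hk
  simp only [this, if_true]
  rw [Finset.filter_ne', Finset.sum_erase _ (by simp)]
  exact quadraticChar_sum_zero (by
    rw [ZMod.ringChar_zmod_n]
    omega)

lemma Tsum_step (p : ℕ) [Fact p.Prime] (hp : 3 ≤ p) (m k : ℕ)
    (hk : 1 ≤ k) (hkm : k ≤ m) (a : ZMod p) :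
    Tsum p (m + 1) k a = -Tsum p m k a := by
  classical
  have key : Tsum p (m + 1) k a
      = ∑ y ∈ Finset.univ.filter
          (fun y : Fin m → ZMod p => (∀ i, y i ≠ 0) ∧ ∑ i, y i ≠ a),
        quadraticChar (ZMod p)
          (∏ i ∈ Finset.univ.filter (fun i : Fin m => (i : ℕ) < k), y i) := by
    unfold Tsum
    refine Finset.sum_nbij' (fun x => x ∘ Fin.castSucc)
      (fun y => Fin.snoc y (a - ∑ i, y i)) ?_ ?_ ?_ ?_ ?_
    · intro x hx
      simp only [Finset.mem_filter, Finset.mem_univ, true_and] at hx ⊢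
      obtain ⟨hne, hsum⟩ := hx
      refine ⟨fun i => hne _, fun h => hne (Fin.last m) ?_⟩
      rw [Fin.sum_univ_castSucc] at hsum
      have h' : ∑ i : Fin m, x (Fin.castSucc i) = a := h
      linear_combination hsum - h'
    · intro y hy
      simp only [Finset.mem_filter, Finset.mem_univ, true_and] at hy ⊢
      obtain ⟨hne, hsum⟩ := hy
      constructor
      · intro i
        refine Fin.lastCases ?_ ?_ i
        · rw [Fin.snoc_last]
          intro h
          apply hsum
          linear_combination -h
        · intro j; rw [Fin.snoc_castSucc]; exact hne j
      · rw [Fin.sum_univ_castSucc]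
        simp only [Fin.snoc_castSucc, Fin.snoc_last]
        ring
    · intro x hx
      simp only [Finset.mem_filter, Finset.mem_univ, true_and] at hx
      obtain ⟨hne, hsum⟩ := hx
      show Fin.snoc (x ∘ Fin.castSucc) (a - ∑ i : Fin m, (x ∘ Fin.castSucc) i) = x
      have h2 : a - ∑ i : Fin m, (x ∘ Fin.castSucc) i = x (Fin.last m) := by
        rw [Fin.sum_univ_castSucc] at hsum
        show a - ∑ i : Fin m, x (Fin.castSucc i) = x (Fin.last m)
        linear_combination -hsum
      rw [h2]
      exact Fin.snoc_init_self x
    · intro y hy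
      funext i
      simp [Fin.snoc_castSucc]
    · intro x hx
      congr 1
      rw [prod_snoc_aux hkm]
      rfl
  rw [key]
  have hsplit := Finset.sum_filter_add_sum_filter_not
    (Finset.univ.filter (fun y : Fin m → ZMod p => ∀ i, y i ≠ 0))
    (fun y => ∑ i, y i = a)
    (fun y => (quadraticChar (ZMod p)
      (∏ i ∈ Finset.univ.filter (fun i : Fin m => (i : ℕ) < k), y i) : ℤ))
  rw [Finset.filter_filter, Finset.filter_filter] at hsplit
  have hz := sum_all_nonzero_zero p hp m k hk hkm
  have h1 : Tsum p m k a = ∑ y ∈ Finset.univ.filter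
      (fun y : Fin m → ZMod p => (∀ i, y i ≠ 0) ∧ ∑ i, y i = a),
      (quadraticChar (ZMod p)
        (∏ i ∈ Finset.univ.filter (fun i : Fin m => (i : ℕ) < k), y i) : ℤ) := rfl
  rw [h1]
  linarith [hsplit, hz]

/-- For `1 ≤ k ≤ n`: if `k ≤ n-1` then `T_p(n,k,a) = -T_p(n-1,k,a)`, and
consequently `T_p(n,k,a) = (-1)^(n-k)·T_p(k,k,a)`. -/
theorem Tsum_recurrence (p : ℕ) [Fact p.Prime] (hp : 3 ≤ p) (n k : ℕ)
    (hk : 1 ≤ k) (hkn : k ≤ n) (a : ZMod p) :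
    (k ≤ n - 1 → Tsum p n k a = -Tsum p (n - 1) k a) ∧
      Tsum p n k a = (-1) ^ (n - k) * Tsum p k k a := by
  have aux : ∀ d : ℕ, Tsum p (k + d) k a = (-1) ^ d * Tsum p k k a := by
    intro d
    induction d with
    | zero => simp
    | succ d ih =>
      have : k + (d + 1) = (k + d) + 1 := by ring
      rw [this, Tsum_step p hp (k + d) k hk (Nat.le_add_right k d) a, ih]
      ring
  constructor
  · intro h
    obtain ⟨m, rfl⟩ : ∃ m, n = m + 1 := ⟨n - 1, by omega⟩
    have hkm : k ≤ m := by omega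
    rw [Nat.add_sub_cancel]
    exact Tsum_step p hp m k hk hkm a
  · obtain ⟨d, rfl⟩ : ∃ d, n = k + d := ⟨n - k, by omega⟩
    rw [Nat.add_sub_cancel_left]
    exact aux d
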